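/- arXiv:2409.10065 — 2 statements merged into one kernel-verified Lean document; each statement's English description precedes it below -/
import Mathlib

section
/- Let 1 ≤ p < ∞ with conjugate exponent p', let J be symmetric with ‖J‖_{p'} < ∞ and ‖J‖_1 ≤ 1, and let g : ℝ → ℝ be Lipschitz continuous on every bounded subset of ℝ. Then for every bounded set V ⊆ L^p(Ω) there exists a constant C ≥ 0 such that ‖g ∘ (K_J u) − g ∘ (K_J v)‖_{L^p(Ω)} ≤ C · ‖u − v‖_{L^p(Ω)} for all u, v ∈ V. -/
open MeasureTheory ENNReal NNReal Set

/-- The nonlocal operator `(K_J u)(x) = ∫_Ω J(x,y) u(y) dy`. -/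
noncomputable def KJ {N : ℕ} (Ω : Set (Fin N → ℝ)) (J : (Fin N → ℝ) → (Fin N → ℝ) → ℝ)
    (u : (Fin N → ℝ) → ℝ) (x : Fin N → ℝ) : ℝ :=
  ∫ y in Ω, J x y * u y

/-- `‖J‖_r = sup_{x ∈ Ω} ‖J(x,·)‖_{L^r(Ω)}`. -/
noncomputable def kernelNorm {N : ℕ} (Ω : Set (Fin N → ℝ))
    (J : (Fin N → ℝ) → (Fin N → ℝ) → ℝ) (r : ℝ≥0∞) : ℝ≥0∞ :=
  ⨆ x ∈ Ω, eLpNorm (J x) r (volume.restrict Ω)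

/-- if `g` is Lipschitz on bounded subsets of `ℝ`, `J` is symmetric with
`‖J‖_{p'} < ∞` and `‖J‖_1 ≤ 1`, then for every bounded set of `L^p(Ω)` (i.e. contained in a
ball of radius `R`) there is a constant `C` such that
`‖g ∘ K_J u − g ∘ K_J v‖_{L^p} ≤ C ‖u − v‖_{L^p}` on that set. -/
theorem stmt3 {N : ℕ} (Ω : Set (Fin N → ℝ)) (hΩ : MeasurableSet Ω)
    (hΩfin : volume Ω < ⊤)
    (J : (Fin N → ℝ) → (Fin N → ℝ) → ℝ) (hJmeas : Measurable (Function.uncurry J))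
    (hJsymm : ∀ x y, J x y = J y x)
    (p p' : ℝ≥0∞) (hp : 1 ≤ p) (hp' : p ≠ ⊤) (hpp' : 1 / p + 1 / p' = 1)
    (hJp' : kernelNorm Ω J p' < ⊤) (hJ1 : kernelNorm Ω J 1 ≤ 1)
    (g : ℝ → ℝ)
    (hg : ∀ B : Set ℝ, Bornology.IsBounded B → ∃ L : ℝ≥0, LipschitzOnWith L g B) :
    ∀ R : ℝ≥0∞, R < ⊤ → ∃ C : ℝ≥0,
      ∀ u v : (Fin N → ℝ) → ℝ,
        MemLp u p (volume.restrict Ω) → MemLp v p (volume.restrict Ω) →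
        eLpNorm u p (volume.restrict Ω) ≤ R → eLpNorm v p (volume.restrict Ω) ≤ R →
        eLpNorm (fun x => g (KJ Ω J u x) - g (KJ Ω J v x)) p (volume.restrict Ω)
          ≤ C * eLpNorm (fun x => u x - v x) p (volume.restrict Ω) := by
  intro R hR
  set μΩ := volume.restrict Ω with hμΩ
  set M := kernelNorm Ω J p' with hMdef
  obtain ⟨L, hL⟩ := hg (Metric.closedBall 0 (M * R).toReal) Metric.isBounded_closedBall
  have hMRtop : M * R ≠ ∞ := ENNReal.mul_ne_top hJp'.ne hR.ne
  set C0 : ℝ≥0∞ := volume Ω ^ p.toReal⁻¹ * L * M with hC0def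
  have hC0top : C0 ≠ ∞ := by
    refine ENNReal.mul_ne_top (ENNReal.mul_ne_top ?_ coe_ne_top) hJp'.ne
    exact (ENNReal.rpow_lt_top_of_nonneg (by positivity) hΩfin.ne).ne
  refine ⟨C0.toNNReal, ?_⟩
  intro u v hu hv huR hvR
  -- key facts about K_J w for x ∈ Ω
  have key : ∀ (w : (Fin N → ℝ) → ℝ), MemLp w p μΩ → ∀ x ∈ Ω,
      Integrable (fun y => J x y * w y) μΩ ∧
      ‖KJ Ω J w x‖ ≤ (M * eLpNorm w p μΩ).toReal := by
    intro w hw x hx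
    have hJx : Measurable (J x) := hJmeas.of_uncurry_left
    have hH : eLpNorm (fun y => J x y * w y) 1 μΩ
        ≤ eLpNorm (J x) p' μΩ * eLpNorm w p μΩ :=
      eLpNorm_smul_le_mul_eLpNorm (f := w) (φ := J x) (p := p') (q := p) (r := 1)
        hw.1 hJx.aestronglyMeasurable
        (hpqr := ⟨by rw [inv_one, add_comm]; simpa only [one_div] using hpp'⟩)
    have hle : eLpNorm (fun y => J x y * w y) 1 μΩ ≤ M * eLpNorm w p μΩ := by
      refine hH.trans (mul_le_mul_left ?_ _)
      exact le_biSup (fun x => eLpNorm (J x) p' (volume.restrict Ω)) hx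
    have hMw : M * eLpNorm w p μΩ < ∞ := ENNReal.mul_lt_top hJp' hw.2
    have hint : Integrable (fun y => J x y * w y) μΩ := by
      rw [← memLp_one_iff_integrable]
      exact ⟨hJx.aestronglyMeasurable.mul hw.1, lt_of_le_of_lt hle hMw⟩
    refine ⟨hint, ?_⟩
    have h1 : ‖KJ Ω J w x‖ ≤ (∫⁻ y, ‖J x y * w y‖₊ ∂μΩ).toReal := by
      have h0 := norm_integral_le_lintegral_norm (μ := μΩ) (fun y => J x y * w y)
      simp only [ofReal_norm_eq_enorm] at h0
      exact h0
    calc ‖KJ Ω J w x‖ ≤ (∫⁻ y, ‖J x y * w y‖₊ ∂μΩ).toReal := h1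
      _ ≤ (M * eLpNorm w p μΩ).toReal := by
          refine ENNReal.toReal_mono hMw.ne ?_
          rw [eLpNorm_one_eq_lintegral_enorm] at hle; exact hle
  have hw : MemLp (fun x => u x - v x) p μΩ := hu.sub hv
  set D := eLpNorm (fun x => u x - v x) p μΩ with hDdef
  have hDtop : D ≠ ∞ := hw.2.ne
  -- membership of K_J u x in the ball
  have hball : ∀ (f : (Fin N → ℝ) → ℝ), MemLp f p μΩ → eLpNorm f p μΩ ≤ R →
      ∀ x ∈ Ω, KJ Ω J f x ∈ Metric.closedBall (0 : ℝ) (M * R).toReal := by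
    intro f hf hfR x hx
    rw [Metric.mem_closedBall, dist_zero_right]
    exact ((key f hf x hx).2).trans
      (ENNReal.toReal_mono hMRtop (mul_le_mul_right hfR _))
  -- pointwise bound
  have hae : ∀ᵐ x ∂μΩ, ‖g (KJ Ω J u x) - g (KJ Ω J v x)‖ ≤ (L : ℝ) * (M * D).toReal := by
    refine (ae_restrict_mem hΩ).mono fun x hx => ?_
    have hdist : dist (g (KJ Ω J u x)) (g (KJ Ω J v x))
        ≤ L * dist (KJ Ω J u x) (KJ Ω J v x) :=
      hL.dist_le_mul _ (hball u hu huR x hx) _ (hball v hv hvR x hx)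
    have hsub : KJ Ω J u x - KJ Ω J v x = KJ Ω J (fun y => u y - v y) x := by
      rw [KJ, KJ, KJ, ← integral_sub (key u hu x hx).1 (key v hv x hx).1]
      congr 1; funext y; ring
    rw [Real.norm_eq_abs, ← Real.dist_eq]
    refine hdist.trans ?_
    rw [Real.dist_eq, ← Real.norm_eq_abs, hsub]
    exact mul_le_mul_of_nonneg_left ((key _ hw x hx).2) L.coe_nonneg
  -- assemble
  have hfin := eLpNorm_le_of_ae_bound (p := p) hae
  rw [Measure.restrict_apply_univ] at hfin
  refine hfin.trans ?_
  have : ENNReal.ofReal ((L : ℝ) * (M * D).toReal) = (L : ℝ≥0∞) * (M * D) := by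
    rw [ENNReal.ofReal_mul L.coe_nonneg, ENNReal.ofReal_coe_nnreal,
      ENNReal.ofReal_toReal (ENNReal.mul_ne_top hJp'.ne hDtop)]
  rw [this, ENNReal.coe_toNNReal hC0top, hC0def]
  ring_nf
  exact le_refl _
end

section
/- Let 1 ≤ p < ∞ with conjugate exponent p'. Assume: J is symmetric with ‖J‖_{p'} < ∞ and ‖J‖_1 ≤ 1; h ∈ L^∞(Ω); g : ℝ → ℝ is Lipschitz continuous on every bounded subset of ℝ; f : ℝ^N × ℝ → ℝ is measurable in x, satisfies |f(x,s) − f(x,t)| ≤ k |s − t| for all x, s, t and some constant k ≥ 0, and |f(x,s)| ≤ k_f|s| + c_f for all x, s. Then the map F : L^p(Ω) → L^p(Ω) defined by F(u) = −h·u + g ∘ (K_J u) + f(·, u(·)) is well defined and Lipschitz continuous on every bounded subset of L^p(Ω). -/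
open MeasureTheory ENNReal NNReal Set

/-- The right-hand side map `F(u) = -h·u + g ∘ (K_J u) + f(·, u(·))`. -/
noncomputable def Fmap {N : ℕ} (Ω : Set (Fin N → ℝ)) (J : (Fin N → ℝ) → (Fin N → ℝ) → ℝ)
    (h : (Fin N → ℝ) → ℝ) (g : ℝ → ℝ) (f : (Fin N → ℝ) → ℝ → ℝ)
    (u : (Fin N → ℝ) → ℝ) : (Fin N → ℝ) → ℝ :=
  fun x => -h x * u x + g (KJ Ω J u x) + f x (u x)

section Aux

variable {N : ℕ} {Ω : Set (Fin N → ℝ)} {J : (Fin N → ℝ) → (Fin N → ℝ) → ℝ}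
  {p p' : ℝ≥0∞} {u v : (Fin N → ℝ) → ℝ}

lemma holder_conj (hpp' : 1 / p + 1 / p' = 1) : (1 : ℝ≥0∞) / 1 = 1 / p' + 1 / p := by
  rw [add_comm, hpp']; simp

lemma holder_triple (hpp' : 1 / p + 1 / p' = 1) : ENNReal.HolderTriple p' p 1 :=
  ⟨by simpa [one_div, add_comm] using hpp'⟩

lemma memL1_kernel (hJmeas : Measurable (Function.uncurry J))
    (hpp' : 1 / p + 1 / p' = 1)
    (hu : MemLp u p (volume.restrict Ω))
    {x : Fin N → ℝ} (hx : eLpNorm (J x) p' (volume.restrict Ω) < ⊤) :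
    MemLp (fun y => J x y * u y) 1 (volume.restrict Ω) := by
  have hJx : MemLp (J x) p' (volume.restrict Ω) :=
    ⟨(hJmeas.of_uncurry_left).aestronglyMeasurable, hx⟩
  have := hu.smul hJx (hpqr := holder_triple hpp')
  have heq : (J x) • u = fun y => J x y * u y := by
    funext y; simp [Pi.smul_apply', smul_eq_mul]
  rwa [heq] at this

lemma integrable_kernel (hJmeas : Measurable (Function.uncurry J))
    (hpp' : 1 / p + 1 / p' = 1) (hJp' : kernelNorm Ω J p' < ⊤)
    (hu : MemLp u p (volume.restrict Ω))
    {x : Fin N → ℝ} (hx : x ∈ Ω) :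
    Integrable (fun y => J x y * u y) (volume.restrict Ω) :=
  memLp_one_iff_integrable.mp (memL1_kernel hJmeas hpp' hu
    ((le_biSup (fun x => eLpNorm (J x) p' (volume.restrict Ω)) hx).trans_lt hJp'))

lemma KJ_norm_le (hJmeas : Measurable (Function.uncurry J))
    (hpp' : 1 / p + 1 / p' = 1)
    (hJp' : kernelNorm Ω J p' < ⊤)
    (hu : MemLp u p (volume.restrict Ω))
    {x : Fin N → ℝ} (hx : x ∈ Ω) :
    ‖KJ Ω J u x‖ ≤ (kernelNorm Ω J p' * eLpNorm u p (volume.restrict Ω)).toReal := by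
  have hJx : eLpNorm (J x) p' (volume.restrict Ω) ≤ kernelNorm Ω J p' :=
    le_biSup (fun x => eLpNorm (J x) p' (volume.restrict Ω)) hx
  have h1 : eLpNorm (fun y => J x y * u y) 1 (volume.restrict Ω)
      ≤ kernelNorm Ω J p' * eLpNorm u p (volume.restrict Ω) := by
    have hH := eLpNorm_smul_le_mul_eLpNorm (μ := volume.restrict Ω) hu.1
      (hJmeas.of_uncurry_left (x := x)).aestronglyMeasurable (hpqr := holder_triple hpp')
    have heq : (J x) • u = fun y => J x y * u y := by
      funext y; simp [Pi.smul_apply', smul_eq_mul]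
    rw [heq] at hH
    exact hH.trans (mul_le_mul_left hJx _)
  have hT : kernelNorm Ω J p' * eLpNorm u p (volume.restrict Ω) ≠ ⊤ :=
    ENNReal.mul_ne_top hJp'.ne hu.2.ne
  have h2 : ‖KJ Ω J u x‖
      ≤ (eLpNorm (fun y => J x y * u y) 1 (volume.restrict Ω)).toReal := by
    rw [KJ]
    refine (norm_integral_le_lintegral_norm _).trans_eq ?_
    rw [eLpNorm_one_eq_lintegral_enorm]
    simp_rw [ofReal_norm_eq_enorm]
  exact h2.trans (ENNReal.toReal_mono hT h1)

lemma KJ_sub (hJmeas : Measurable (Function.uncurry J))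
    (hpp' : 1 / p + 1 / p' = 1) (hJp' : kernelNorm Ω J p' < ⊤)
    (hu : MemLp u p (volume.restrict Ω)) (hv : MemLp v p (volume.restrict Ω))
    {x : Fin N → ℝ} (hx : x ∈ Ω) :
    KJ Ω J u x - KJ Ω J v x = KJ Ω J (fun y => u y - v y) x := by
  unfold KJ
  rw [← integral_sub (integrable_kernel hJmeas hpp' hJp' hu hx)
    (integrable_kernel hJmeas hpp' hJp' hv hx)]
  congr 1
  funext y
  ring

lemma KJ_aesm (hJmeas : Measurable (Function.uncurry J))
    (hu : AEStronglyMeasurable u (volume.restrict Ω)) :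
    AEStronglyMeasurable (KJ Ω J u) (volume.restrict Ω) := by
  have hKeq : KJ Ω J u = KJ Ω J (hu.mk u) := by
    funext x
    exact integral_congr_ae (hu.ae_eq_mk.mono fun y hy => by dsimp only; rw [hy])
  rw [hKeq]
  have hF : StronglyMeasurable fun z : (Fin N → ℝ) × (Fin N → ℝ) =>
      J z.1 z.2 * hu.mk u z.2 :=
    (hJmeas.mul (hu.stronglyMeasurable_mk.measurable.comp measurable_snd)).stronglyMeasurable
  exact hF.integral_prod_right'.aestronglyMeasurable

lemma g_continuous {g : ℝ → ℝ}
    (hg : ∀ B : Set ℝ, Bornology.IsBounded B → ∃ L : ℝ≥0, LipschitzOnWith L g B) :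
    Continuous g := by
  rw [continuous_iff_continuousAt]
  intro t
  obtain ⟨L, hL⟩ := hg (Metric.closedBall t 1) Metric.isBounded_closedBall
  exact hL.continuousOn.continuousAt (Metric.closedBall_mem_nhds t one_pos)

lemma f_comp_aesm {f : (Fin N → ℝ) → ℝ → ℝ}
    (hfmeas : ∀ s : ℝ, Measurable fun x => f x s)
    {k : ℝ≥0} (hflip : ∀ x : Fin N → ℝ, LipschitzWith k (f x))
    {w : (Fin N → ℝ) → ℝ} (hw : AEStronglyMeasurable w (volume.restrict Ω)) :
    AEStronglyMeasurable (fun x => f x (w x)) (volume.restrict Ω) := by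
  have huncurry : Measurable (Function.uncurry fun (s : ℝ) (x : Fin N → ℝ) => f x s) :=
    measurable_uncurry_of_continuous_of_measurable (fun x => (hflip x).continuous) hfmeas
  have hmk : Measurable fun x => f x (hw.mk w x) :=
    huncurry.comp ((hw.stronglyMeasurable_mk.measurable).prodMk measurable_id)
  exact hmk.aestronglyMeasurable.congr (hw.ae_eq_mk.mono fun x hx => by dsimp only; rw [hx])

end Aux

/-- under the stated hypotheses on `J`, `h`, `g` and `f`, the map
`F(u) = -h·u + g ∘ (K_J u) + f(·, u(·))` maps `L^p(Ω)` into `L^p(Ω)` and is Lipschitz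
continuous on every bounded subset of `L^p(Ω)`. -/
theorem stmt4 {N : ℕ} (Ω : Set (Fin N → ℝ)) (hΩ : MeasurableSet Ω)
    (hΩfin : volume Ω < ⊤)
    (J : (Fin N → ℝ) → (Fin N → ℝ) → ℝ) (hJmeas : Measurable (Function.uncurry J))
    (hJsymm : ∀ x y, J x y = J y x)
    (p p' : ℝ≥0∞) (hp : 1 ≤ p) (hptop : p ≠ ⊤) (hpp' : 1 / p + 1 / p' = 1)
    (hJp' : kernelNorm Ω J p' < ⊤) (hJ1 : kernelNorm Ω J 1 ≤ 1)
    (h : (Fin N → ℝ) → ℝ) (hh : MemLp h ⊤ (volume.restrict Ω))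
    (g : ℝ → ℝ)
    (hg : ∀ B : Set ℝ, Bornology.IsBounded B → ∃ L : ℝ≥0, LipschitzOnWith L g B)
    (f : (Fin N → ℝ) → ℝ → ℝ) (hfmeas : ∀ s : ℝ, Measurable fun x => f x s)
    (k : ℝ≥0) (hflip : ∀ x : Fin N → ℝ, LipschitzWith k (f x))
    (k_f c_f : ℝ) (hkf : 0 < k_f) (hcf : 0 < c_f)
    (hfgrowth : ∀ (x : Fin N → ℝ) (s : ℝ), |f x s| ≤ k_f * |s| + c_f) :
    (∀ u : (Fin N → ℝ) → ℝ, MemLp u p (volume.restrict Ω) →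
        MemLp (Fmap Ω J h g f u) p (volume.restrict Ω)) ∧
    (∀ R : ℝ≥0∞, R < ⊤ → ∃ C : ℝ≥0,
      ∀ u v : (Fin N → ℝ) → ℝ,
        MemLp u p (volume.restrict Ω) → MemLp v p (volume.restrict Ω) →
        eLpNorm u p (volume.restrict Ω) ≤ R → eLpNorm v p (volume.restrict Ω) ≤ R →
        eLpNorm (fun x => Fmap Ω J h g f u x - Fmap Ω J h g f v x) p (volume.restrict Ω)
          ≤ C * eLpNorm (fun x => u x - v x) p (volume.restrict Ω)) := by
  haveI : IsFiniteMeasure (volume.restrict Ω) := ⟨by rwa [Measure.restrict_apply_univ]⟩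
  have hgcont : Continuous g := g_continuous hg
  constructor
  · -- membership part
    intro u hu
    have h1 : MemLp (fun x => -h x * u x) p (volume.restrict Ω) := by
      have hsm := hu.smul (hh.neg) (r := p)
      have heq : (-h) • u = fun x => -h x * u x := by
        funext x; simp [Pi.smul_apply', smul_eq_mul]
      rwa [heq] at hsm
    set Mu : ℝ := (kernelNorm Ω J p' * eLpNorm u p (volume.restrict Ω)).toReal with hMu
    have hMu0 : 0 ≤ Mu := ENNReal.toReal_nonneg
    have hKJb : ∀ᵐ x ∂(volume.restrict Ω), ‖KJ Ω J u x‖ ≤ Mu :=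
      (ae_restrict_mem hΩ).mono fun x hx => KJ_norm_le hJmeas hpp' hJp' hu hx
    obtain ⟨L, hL⟩ := hg (Metric.closedBall 0 Mu) Metric.isBounded_closedBall
    have h2 : MemLp (fun x => g (KJ Ω J u x)) p (volume.restrict Ω) := by
      refine MemLp.of_bound
        (hgcont.comp_aestronglyMeasurable (KJ_aesm hJmeas hu.1)) (|g 0| + L * Mu) ?_
      refine hKJb.mono fun x hx => ?_
      have hmem : KJ Ω J u x ∈ Metric.closedBall (0 : ℝ) Mu := by
        simpa [Metric.mem_closedBall, Real.dist_eq] using hx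
      have h0 : (0 : ℝ) ∈ Metric.closedBall (0 : ℝ) Mu := Metric.mem_closedBall_self hMu0
      have hd := hL.dist_le_mul _ hmem _ h0
      rw [Real.dist_eq, Real.dist_eq, sub_zero] at hd
      have habs := abs_sub_abs_le_abs_sub (g (KJ Ω J u x)) (g 0)
      have hLM : (L : ℝ) * |KJ Ω J u x| ≤ (L : ℝ) * Mu :=
        mul_le_mul_of_nonneg_left (by simpa [Real.norm_eq_abs] using hx) L.coe_nonneg
      rw [Real.norm_eq_abs]
      linarith
    have h3 : MemLp (fun x => f x (u x)) p (volume.restrict Ω) := by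
      have haesm := f_comp_aesm hfmeas hflip hu.1
      have hbound : MemLp (fun x => k_f * ‖u x‖ + c_f) p (volume.restrict Ω) := by
        have := (hu.norm.const_mul k_f).add (memLp_const (μ := volume.restrict Ω) c_f)
        have heq : ((fun x => k_f * ‖u x‖) + fun _ => c_f)
            = fun x => k_f * ‖u x‖ + c_f := rfl
        rwa [heq] at this
      refine hbound.of_le haesm (Filter.Eventually.of_forall fun x => ?_)
      have hgx := hfgrowth x (u x)
      have hnn : (0 : ℝ) ≤ k_f * ‖u x‖ + c_f := by positivity
      rw [Real.norm_eq_abs, Real.norm_eq_abs (k_f * ‖u x‖ + c_f), abs_of_nonneg hnn,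
        Real.norm_eq_abs]
      exact hgx
    have hFeq : Fmap Ω J h g f u
        = (fun x => -h x * u x) + ((fun x => g (KJ Ω J u x)) + fun x => f x (u x)) := by
      funext x
      simp [Fmap, Pi.add_apply]
      ring
    rw [hFeq]
    exact h1.add (h2.add h3)
  · -- Lipschitz part
    intro R hR
    set Mp' : ℝ≥0∞ := kernelNorm Ω J p' with hMp'
    set M : ℝ := (Mp' * R).toReal with hM
    obtain ⟨L, hL⟩ := hg (Metric.closedBall 0 M) Metric.isBounded_closedBall
    have hvolfin : volume Ω ^ p.toReal⁻¹ ≠ ⊤ :=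
      ENNReal.rpow_ne_top_of_nonneg (inv_nonneg.mpr ENNReal.toReal_nonneg) hΩfin.ne
    set Ch : ℝ≥0 := (eLpNorm h ⊤ (volume.restrict Ω)).toNNReal with hCh
    set Cg : ℝ≥0 := (volume Ω ^ p.toReal⁻¹ * L * Mp').toNNReal with hCg
    have hCgfin : volume Ω ^ p.toReal⁻¹ * (L : ℝ≥0∞) * Mp' ≠ ⊤ :=
      ENNReal.mul_ne_top (ENNReal.mul_ne_top hvolfin ENNReal.coe_ne_top) hJp'.ne
    refine ⟨Ch + Cg + k, fun u v hu hv huR hvR => ?_⟩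
    have hw : MemLp (fun x => u x - v x) p (volume.restrict Ω) := hu.sub hv
    set E : ℝ≥0∞ := eLpNorm (fun x => u x - v x) p (volume.restrict Ω) with hE
    -- the three pieces
    set A : (Fin N → ℝ) → ℝ := fun x => -h x * u x - -h x * v x with hA
    set B : (Fin N → ℝ) → ℝ := fun x => g (KJ Ω J u x) - g (KJ Ω J v x) with hB
    set Cc : (Fin N → ℝ) → ℝ := fun x => f x (u x) - f x (v x) with hCc
    have hAm : AEStronglyMeasurable A (volume.restrict Ω) :=
      ((hh.1.neg.mul hu.1).sub (hh.1.neg.mul hv.1))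
    have hBm : AEStronglyMeasurable B (volume.restrict Ω) :=
      ((hgcont.comp_aestronglyMeasurable (KJ_aesm hJmeas hu.1)).sub
        (hgcont.comp_aestronglyMeasurable (KJ_aesm hJmeas hv.1)))
    have hCm : AEStronglyMeasurable Cc (volume.restrict Ω) :=
      ((f_comp_aesm hfmeas hflip hu.1).sub (f_comp_aesm hfmeas hflip hv.1))
    -- bound for A
    have hhbd : ∀ᵐ x ∂(volume.restrict Ω), ‖h x‖₊ ≤ Ch := by
      have hae := ae_le_eLpNormEssSup (f := h) (μ := volume.restrict Ω)
      have hne : eLpNormEssSup h (volume.restrict Ω) ≠ ⊤ := by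
        rw [← eLpNorm_exponent_top]; exact hh.2.ne
      refine hae.mono fun x hx => ?_
      rw [← ENNReal.coe_le_coe]
      rw [hCh, eLpNorm_exponent_top, ENNReal.coe_toNNReal hne]
      exact hx
    have hI : eLpNorm A p (volume.restrict Ω) ≤ (Ch : ℝ≥0∞) * E := by
      have := eLpNorm_le_nnreal_smul_eLpNorm_of_ae_le_mul (μ := volume.restrict Ω)
        (f := A) (g := fun x => u x - v x) (c := Ch)
        (hhbd.mono fun x hx => by
          have hAx : A x = -(h x) * (u x - v x) := by simp only [hA]; ring
          rw [hAx, nnnorm_mul, nnnorm_neg]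
          exact mul_le_mul_left hx _) p
      rwa [ENNReal.smul_def, smul_eq_mul] at this
    -- bound for B
    have hMfin : Mp' * R ≠ ⊤ := ENNReal.mul_ne_top hJp'.ne hR.ne
    have hgbd : ∀ᵐ x ∂(volume.restrict Ω), ‖B x‖ ≤ (L : ℝ) * (Mp' * E).toReal := by
      refine (ae_restrict_mem hΩ).mono fun x hx => ?_
      have hub : ‖KJ Ω J u x‖ ≤ M := by
        refine (KJ_norm_le hJmeas hpp' hJp' hu hx).trans ?_
        exact ENNReal.toReal_mono hMfin (mul_le_mul_right huR _)
      have hvb : ‖KJ Ω J v x‖ ≤ M := by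
        refine (KJ_norm_le hJmeas hpp' hJp' hv hx).trans ?_
        exact ENNReal.toReal_mono hMfin (mul_le_mul_right hvR _)
      have hmemu : KJ Ω J u x ∈ Metric.closedBall (0 : ℝ) M := by
        simpa [Metric.mem_closedBall, Real.dist_eq, Real.norm_eq_abs] using hub
      have hmemv : KJ Ω J v x ∈ Metric.closedBall (0 : ℝ) M := by
        simpa [Metric.mem_closedBall, Real.dist_eq, Real.norm_eq_abs] using hvb
      have hd := hL.dist_le_mul _ hmemu _ hmemv
      rw [Real.dist_eq, Real.dist_eq] at hd
      have hsub := KJ_sub hJmeas hpp' hJp' hu hv hx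
      have hKw := KJ_norm_le hJmeas hpp' hJp' hw hx
      rw [hB, Real.norm_eq_abs]
      refine hd.trans ?_
      rw [hsub]
      refine mul_le_mul_of_nonneg_left ?_ L.coe_nonneg
      simpa [Real.norm_eq_abs] using hKw
    have hII : eLpNorm B p (volume.restrict Ω) ≤ (Cg : ℝ≥0∞) * E := by
      refine (eLpNorm_le_of_ae_bound hgbd).trans ?_
      rw [Measure.restrict_apply_univ]
      have hofr : ENNReal.ofReal ((L : ℝ) * (Mp' * E).toReal) = (L : ℝ≥0∞) * (Mp' * E) := by
        rw [ENNReal.ofReal_mul L.coe_nonneg, ENNReal.ofReal_coe_nnreal,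
          ENNReal.ofReal_toReal (ENNReal.mul_ne_top hJp'.ne hw.2.ne)]
      rw [hofr, hCg, ENNReal.coe_toNNReal hCgfin]
      exact le_of_eq (by ring)
    -- bound for Cc
    have hIII : eLpNorm Cc p (volume.restrict Ω) ≤ (k : ℝ≥0∞) * E := by
      have := eLpNorm_le_nnreal_smul_eLpNorm_of_ae_le_mul (μ := volume.restrict Ω)
        (f := Cc) (g := fun x => u x - v x) (c := k)
        (Filter.Eventually.of_forall fun x => by
          have hd := (hflip x).dist_le_mul (u x) (v x)
          rw [Real.dist_eq, Real.dist_eq] at hd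
          rw [← NNReal.coe_le_coe]
          push_cast [coe_nnnorm, Real.norm_eq_abs]
          simpa [hCc, Real.norm_eq_abs] using hd) p
      rwa [ENNReal.smul_def, smul_eq_mul] at this
    -- combine
    have hdecomp : (fun x => Fmap Ω J h g f u x - Fmap Ω J h g f v x) = A + (B + Cc) := by
      funext x
      simp only [Fmap, Pi.add_apply, hA, hB, hCc]
      ring
    rw [hdecomp]
    refine (eLpNorm_add_le hAm (hBm.add hCm) hp).trans ?_
    refine (add_le_add hI ((eLpNorm_add_le hBm hCm hp).trans (add_le_add hII hIII))).trans ?_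
    rw [ENNReal.coe_add, ENNReal.coe_add]
    exact le_of_eq (by ring)
end
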